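/- Suppose l(·,v) is convex and differentiable for each v, the distribution map is ε-sensitive, l(x,·) is L₂-Lipschitz in v, and ‖∇_x l(x,v)‖ ≤ L₃. Let x^{r+1} = x^r − η^r E_{v∼f_v(x^r)}[∇_x l(x^r,v)] for a minimization problem with optimum x* of f(x) = E_{v∼f_v(x)}[l(x,v)]. Then after k iterations, min_{0≤r≤k} (f(x^r) − f(x*)) ≤ [ε L₂ Σ_{r=0}^k η^r ‖x* − x^r‖] / Σ_{r=0}^k η^r + [‖x⁰ − x*‖² + L₃² Σ_{r=0}^k (η^r)²] / (2 Σ_{r=0}^k η^r). -/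

import Mathlib

open MeasureTheory Finset
open scoped RealInnerProductSpace NNReal

/-!
Every step is a step of an inexact subgradient method towards `x*`. Averaging the gradient
inequality of `l(·, v)` over `v ∼ F(x^r)` gives `f(x^r) − E_{F(x^r)} l(x*, ·) ≤ ⟪g^r, x^r − x*⟫`,
and since `l(x*, ·)` is `L₂`-Lipschitz, `ε`-sensitivity replaces `F(x^r)` by `F(x*)` at the cost
`ε L₂ ‖x* − x^r‖`. Expanding `‖x^{r+1} − x*‖²` and telescoping then bounds the `η`-weighted
average of the gaps, and hence the smallest gap.
-/

theorem ConvexOn.apply_sub_le_sub_of_hasFDerivAt {E : Type*} [NormedAddCommGroup E]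
    [NormedSpace ℝ E] {s : Set E} {f : E → ℝ} {f' : E →L[ℝ] ℝ} {x y : E}
    (hf : ConvexOn ℝ s f) (hx : x ∈ s) (hy : y ∈ s) (hd : HasFDerivAt f f' x) :
    f' (y - x) ≤ f y - f x := by
  have hline : HasDerivAt (f ∘ AffineMap.lineMap (k := ℝ) x y) (f' (y - x)) 0 :=
    hd.comp_hasDerivAt_of_eq 0 AffineMap.hasDerivAt_lineMap (AffineMap.lineMap_apply_zero x y).symm
  have := (hf.comp_affineMap (AffineMap.lineMap (k := ℝ) x y)).le_slope_of_hasDerivAt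
    (by simpa using hx) (by simpa using hy) zero_lt_one hline
  simpa [slope_def_field] using this

theorem ConvexOn.sub_le_inner_of_hasGradientAt {E : Type*} [NormedAddCommGroup E]
    [InnerProductSpace ℝ E] [CompleteSpace E] {s : Set E} {f : E → ℝ} {g x y : E}
    (hf : ConvexOn ℝ s f) (hx : x ∈ s) (hy : y ∈ s) (hg : HasGradientAt f g x) :
    f x - f y ≤ ⟪g, x - y⟫ := by
  have := hf.apply_sub_le_sub_of_hasFDerivAt hx hy hg.hasFDerivAt
  rw [InnerProductSpace.toDual_apply_apply, ← neg_sub x y, inner_neg_right] at this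
  linarith

theorem abs_integral_sub_le_of_lipschitzWith {V : Type*} [PseudoMetricSpace V]
    [MeasurableSpace V] {μ ν : Measure V} [IsProbabilityMeasure μ] [IsProbabilityMeasure ν]
    {δ : ℝ} (h : ∀ g : V → ℝ, LipschitzWith 1 g → |∫ v, g v ∂μ - ∫ v, g v ∂ν| ≤ δ)
    {K : ℝ≥0} {g : V → ℝ} (hg : LipschitzWith K g) :
    |∫ v, g v ∂μ - ∫ v, g v ∂ν| ≤ K * δ := by
  obtain rfl | hK := eq_or_ne K 0
  · obtain ⟨v₀⟩ := nonempty_of_isProbabilityMeasure μ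
    have hconst : g = fun _ => g v₀ := funext fun v => (LipschitzWith.zero_iff g).1 hg v v₀
    rw [hconst]; simp
  · have hK' : (0 : ℝ) < K := by positivity
    have hscaled : LipschitzWith 1 fun v => (K : ℝ)⁻¹ * g v := by
      refine LipschitzWith.of_dist_le_mul fun a b => ?_
      rw [Real.dist_eq, ← mul_sub, abs_mul, abs_inv, NNReal.abs_eq, NNReal.coe_one, one_mul,
        inv_mul_le_iff₀ hK', ← Real.dist_eq]
      exact hg.dist_le_mul a b
    have := h _ hscaled
    rwa [integral_const_mul, integral_const_mul, ← mul_sub, abs_mul, abs_inv, NNReal.abs_eq,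
      inv_mul_le_iff₀ hK'] at this

theorem Finset.exists_le_div_sum_of_sum_mul_le {ι : Type*} {s : Finset ι} (hs : s.Nonempty)
    {w a : ι → ℝ} {C : ℝ} (hw : ∀ i ∈ s, 0 < w i) (h : ∑ i ∈ s, w i * a i ≤ C) :
    ∃ i ∈ s, a i ≤ C / ∑ i ∈ s, w i := by
  have hW : 0 < ∑ i ∈ s, w i := sum_pos hw hs
  obtain ⟨i, hi, hle⟩ := exists_le_of_sum_le hs (f := fun i => w i * a i)
    (g := fun i => w i * (C / ∑ j ∈ s, w j)) (by rwa [← sum_mul, mul_div_cancel₀ _ hW.ne'])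
  exact ⟨i, hi, le_of_mul_le_mul_left hle (hw i hi)⟩

theorem norm_sub_smul_sub_sq {E : Type*} [NormedAddCommGroup E] [InnerProductSpace ℝ E]
    (x g z : E) (η : ℝ) :
    ‖x - η • g - z‖ ^ 2 = ‖x - z‖ ^ 2 - 2 * η * ⟪g, x - z⟫ + η ^ 2 * ‖g‖ ^ 2 := by
  rw [sub_right_comm, norm_sub_sq_real, real_inner_smul_right, norm_smul, mul_pow,
    Real.norm_eq_abs, sq_abs, real_inner_comm]
  ring

section InexactGradientDescent

variable {E : Type*} [NormedAddCommGroup E] [InnerProductSpace ℝ E]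
  {x g : ℕ → E} {η a b : ℕ → ℝ} {z : E} {G : ℝ}

theorem two_mul_sum_le_of_inexact_gradient_descent
    (hη : ∀ r, 0 ≤ η r) (hx : ∀ r, x (r + 1) = x r - η r • g r) (hg : ∀ r, ‖g r‖ ≤ G)
    (ha : ∀ r, a r ≤ ⟪g r, x r - z⟫ + b r) (k : ℕ) :
    2 * ∑ i ∈ range k, η i * a i ≤
      2 * ∑ i ∈ range k, η i * b i + ‖x 0 - z‖ ^ 2 + G ^ 2 * ∑ i ∈ range k, η i ^ 2 := by
  have hstep : ∀ r, 2 * (η r * a r) ≤ 2 * (η r * b r) + (‖x r - z‖ ^ 2 - ‖x (r + 1) - z‖ ^ 2)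
      + G ^ 2 * η r ^ 2 := fun r => by
    have hgG : ‖g r‖ ^ 2 ≤ G ^ 2 := pow_le_pow_left₀ (norm_nonneg _) (hg r) 2
    have := mul_le_mul_of_nonneg_left (ha r) (hη r)
    rw [hx r, norm_sub_smul_sub_sq]
    nlinarith [mul_le_mul_of_nonneg_left hgG (sq_nonneg (η r))]
  have htel := sum_range_sub' (fun i => ‖x i - z‖ ^ 2) k
  have hsum := sum_le_sum fun r (_ : r ∈ range k) => hstep r
  simp only [← mul_sum, sum_add_distrib] at hsum
  nlinarith [sq_nonneg ‖x k - z‖]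

theorem exists_le_of_inexact_gradient_descent
    (hη : ∀ r, 0 < η r) (hx : ∀ r, x (r + 1) = x r - η r • g r) (hg : ∀ r, ‖g r‖ ≤ G)
    (ha : ∀ r, a r ≤ ⟪g r, x r - z⟫ + b r) (k : ℕ) :
    ∃ r ≤ k, a r ≤ (∑ i ∈ range (k + 1), η i * b i) / (∑ i ∈ range (k + 1), η i) +
      (‖x 0 - z‖ ^ 2 + G ^ 2 * ∑ i ∈ range (k + 1), η i ^ 2) / (2 * ∑ i ∈ range (k + 1), η i) := by
  have hsum := two_mul_sum_le_of_inexact_gradient_descent (fun r => (hη r).le) hx hg ha (k + 1)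
  obtain ⟨r, hr, hle⟩ := exists_le_div_sum_of_sum_mul_le (s := range (k + 1)) (w := η) (a := a)
    (C := ∑ i ∈ range (k + 1), η i * b i +
      (‖x 0 - z‖ ^ 2 + G ^ 2 * ∑ i ∈ range (k + 1), η i ^ 2) / 2)
    nonempty_range_add_one (fun i _ => hη i) (by linarith)
  refine ⟨r, Nat.lt_succ_iff.mp (mem_range.mp hr), hle.trans_eq ?_⟩
  rw [add_div, div_div, mul_comm 2]

end InexactGradientDescent

theorem integral_sub_le_inner_integral_of_convexOn {E V : Type*} [NormedAddCommGroup E]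
    [InnerProductSpace ℝ E] [CompleteSpace E] [MeasurableSpace V] {μ : Measure V}
    {s : Set E} {l : E → V → ℝ} {G : V → E} {y z : E}
    (hconv : ∀ v, ConvexOn ℝ s (l · v)) (hy : y ∈ s) (hz : z ∈ s)
    (hgrad : ∀ v, HasGradientAt (l · v) (G v) y)
    (hly : Integrable (l y) μ) (hlz : Integrable (l z) μ) (hG : Integrable G μ) :
    ∫ v, l y v ∂μ - ∫ v, l z v ∂μ ≤ ⟪∫ v, G v ∂μ, y - z⟫ :=
  calc ∫ v, l y v ∂μ - ∫ v, l z v ∂μ = ∫ v, (l y v - l z v) ∂μ := (integral_sub hly hlz).symm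
    _ ≤ ∫ v, ⟪G v, y - z⟫ ∂μ := integral_mono (hly.sub hlz) (hG.inner_const _)
        fun v => (hconv v).sub_le_inner_of_hasGradientAt hy hz (hgrad v)
    _ = ⟪∫ v, G v ∂μ, y - z⟫ := by simp_rw [real_inner_comm (y - z)]; exact integral_inner hG _

theorem convex_convergence_bound_general
    {n m : ℕ}
    (F : EuclideanSpace ℝ (Fin n) → Measure (EuclideanSpace ℝ (Fin m)))
    (hprob : ∀ x, IsProbabilityMeasure (F x))
    (l : EuclideanSpace ℝ (Fin n) → EuclideanSpace ℝ (Fin m) → ℝ)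
    (gl : EuclideanSpace ℝ (Fin n) → EuclideanSpace ℝ (Fin m) → EuclideanSpace ℝ (Fin n))
    (ε L₂ L₃ : ℝ) (hL₂ : 0 ≤ L₂)
    -- ε-sensitivity via Kantorovich–Rubinstein duality
    (hsens : ∀ x₁ x₂, ∀ g : EuclideanSpace ℝ (Fin m) → ℝ, LipschitzWith 1 g →
      |(∫ v, g v ∂(F x₁)) - ∫ v, g v ∂(F x₂)| ≤ ε * ‖x₁ - x₂‖)
    -- l(·,v) is convex and differentiable with gradient gl
    (hconv : ∀ v, ConvexOn ℝ Set.univ (fun x => l x v))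
    (hgrad : ∀ x v, HasGradientAt (fun y => l y v) (gl x v) x)
    -- l(x,·) is L₂-Lipschitz in v
    (hlipv : ∀ x, LipschitzWith (Real.toNNReal L₂) (l x))
    -- bounded gradient
    (hgbd : ∀ x v, ‖gl x v‖ ≤ L₃)
    -- integrability
    (hint : ∀ x y, Integrable (l y) (F x) ∧ Integrable (gl y) (F x))
    (η : ℕ → ℝ) (hη : ∀ r, 0 < η r)
    (x : ℕ → EuclideanSpace ℝ (Fin n))
    (hupd : ∀ r, x (r + 1) = x r - η r • ∫ v, gl (x r) v ∂(F (x r)))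
    (xstar : EuclideanSpace ℝ (Fin n))
    (k : ℕ) :
    ∃ r ≤ k,
      (∫ v, l (x r) v ∂(F (x r))) - (∫ v, l xstar v ∂(F xstar)) ≤
        (ε * L₂ * ∑ i ∈ Finset.range (k + 1), η i * ‖xstar - x i‖) /
          (∑ i ∈ Finset.range (k + 1), η i) +
        (‖x 0 - xstar‖ ^ 2 + L₃ ^ 2 * ∑ i ∈ Finset.range (k + 1), (η i) ^ 2) /
          (2 * ∑ i ∈ Finset.range (k + 1), η i) := by
  have hstep : ∀ r, (∫ v, l (x r) v ∂(F (x r))) - ∫ v, l xstar v ∂(F xstar) ≤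
      ⟪∫ v, gl (x r) v ∂(F (x r)), x r - xstar⟫ + ε * L₂ * ‖xstar - x r‖ := fun r => by
    have hconvex := integral_sub_le_inner_integral_of_convexOn (μ := F (x r))
      (fun v => hconv v) (Set.mem_univ _) (Set.mem_univ xstar) (hgrad (x r))
      (hint _ _).1 (hint _ _).1 (hint _ _).2
    have hshift := abs_integral_sub_le_of_lipschitzWith (hsens (x r) xstar) (hlipv xstar)
    rw [Real.coe_toNNReal _ hL₂, norm_sub_rev] at hshift
    linarith [(abs_le.mp hshift).2]
  have hmean : ∀ r, ‖∫ v, gl (x r) v ∂(F (x r))‖ ≤ L₃ := fun r => by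
    simpa using norm_integral_le_of_norm_le_const (μ := F (x r)) (ae_of_all _ (hgbd (x r)))
  obtain ⟨r, hr, hle⟩ := exists_le_of_inexact_gradient_descent hη hupd hmean hstep k
  refine ⟨r, hr, hle.trans_eq ?_⟩
  simp only [mul_left_comm _ (ε * L₂), ← mul_sum]

/-- Convergence of approximate (expected-)gradient descent under convexity in the
decision-dependent setting: with `ε`-sensitive distribution map (Kantorovich–Rubinstein
dual form), convex differentiable loss `l(·,v)`, `L₂`-Lipschitzness of `l(x,·)` in `v`,
gradient bound `L₃`, iterates `x^{r+1} = x^r − η^r E_{v∼F(x^r)}[∇ₓ l(x^r,v)]` and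
minimizer `x*` of `f(x) = E_{v∼F(x)}[l(x,v)]`, after `k` iterations
`min_{0≤r≤k} (f(x^r) − f(x*))` is bounded as stated. -/
theorem convex_convergence_bound
    {n m : ℕ}
    (F : EuclideanSpace ℝ (Fin n) → Measure (EuclideanSpace ℝ (Fin m)))
    (hprob : ∀ x, IsProbabilityMeasure (F x))
    (l : EuclideanSpace ℝ (Fin n) → EuclideanSpace ℝ (Fin m) → ℝ)
    (gl : EuclideanSpace ℝ (Fin n) → EuclideanSpace ℝ (Fin m) → EuclideanSpace ℝ (Fin n))
    (ε L₂ L₃ : ℝ) (hε : 0 ≤ ε) (hL₂ : 0 ≤ L₂) (hL₃ : 0 ≤ L₃)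
    -- ε-sensitivity via Kantorovich–Rubinstein duality
    (hsens : ∀ x₁ x₂, ∀ g : EuclideanSpace ℝ (Fin m) → ℝ, LipschitzWith 1 g →
      |(∫ v, g v ∂(F x₁)) - ∫ v, g v ∂(F x₂)| ≤ ε * ‖x₁ - x₂‖)
    -- l(·,v) is convex and differentiable with gradient gl
    (hconv : ∀ v, ConvexOn ℝ Set.univ (fun x => l x v))
    (hgrad : ∀ x v, HasGradientAt (fun y => l y v) (gl x v) x)
    -- l(x,·) is L₂-Lipschitz in v
    (hlipv : ∀ x, LipschitzWith (Real.toNNReal L₂) (l x))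
    -- bounded gradient
    (hgbd : ∀ x v, ‖gl x v‖ ≤ L₃)
    -- integrability
    (hint : ∀ x y, Integrable (l y) (F x) ∧ Integrable (gl y) (F x))
    (η : ℕ → ℝ) (hη : ∀ r, 0 < η r)
    (x : ℕ → EuclideanSpace ℝ (Fin n))
    (hupd : ∀ r, x (r + 1) = x r - η r • ∫ v, gl (x r) v ∂(F (x r)))
    (xstar : EuclideanSpace ℝ (Fin n))
    -- x* minimizes the decision-dependent objective
    (hopt : ∀ y, (∫ v, l xstar v ∂(F xstar)) ≤ ∫ v, l y v ∂(F y))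
    (k : ℕ) :
    ∃ r ≤ k,
      (∫ v, l (x r) v ∂(F (x r))) - (∫ v, l xstar v ∂(F xstar)) ≤
        (ε * L₂ * ∑ i ∈ Finset.range (k + 1), η i * ‖xstar - x i‖) /
          (∑ i ∈ Finset.range (k + 1), η i) +
        (‖x 0 - xstar‖ ^ 2 + L₃ ^ 2 * ∑ i ∈ Finset.range (k + 1), (η i) ^ 2) /
          (2 * ∑ i ∈ Finset.range (k + 1), η i) :=
  convex_convergence_bound_general F hprob l gl ε L₂ L₃ hL₂ hsens hconv hgrad hlipv hgbd hint η hη x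
    hupd xstar k
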